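/- arXiv:2603.19003 — 2 statements merged into one kernel-verified Lean document; each statement's English description precedes it below -/
import Mathlib

section
/- Let (T,w,x) be a finite weighted tree. For every ordered pair (u,v) of adjacent vertices of T, let T_{(u,v)} be the connected component of T − {u,v} containing v and define Z(u,v) := OPT(T_{(u,v)}) − OPT(T_{(u,v)} − v). Then for every ordered pair (u,v) of adjacent vertices, Z(u,v) = max( x(v), max_{u' ∼ v, u' ≠ u} ( w(v,u') − Z(v,u') ) ), where the inner maximum ranges over the neighbours u' of v in T other than u and is taken to be −∞ when this set is empty (so that Z(u,v) = x(v) when u is the only neighbour of v). -/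
open scoped Classical

/-- `M` is a monomer-dimer configuration (matching) of the induced weighted subgraph of `G`
on the vertex set `S`: all its edges are edges of `G` with both endpoints in `S`, and
its edges are pairwise non-adjacent. -/
def IsMatchingOn {V : Type*} (G : SimpleGraph V) (S : Set V) (M : Finset (Sym2 V)) : Prop :=
  (∀ e ∈ M, e ∈ G.edgeSet ∧ ∀ v, v ∈ e → v ∈ S) ∧
  (∀ e ∈ M, ∀ f ∈ M, e ≠ f → ∀ v, v ∈ e → v ∉ f)

/-- The monomer-dimer weight of `M` on vertex set `S`: the sum of the edge weights of the
dimers plus the sum of the vertex weights of the monomers (vertices of `S` not covered). -/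
noncomputable def MDweight {V : Type*} [Fintype V] (w : Sym2 V → ℝ) (x : V → ℝ) (S : Set V)
    (M : Finset (Sym2 V)) : ℝ :=
  ∑ e ∈ M, w e + ∑ v ∈ Finset.univ.filter (fun v => v ∈ S ∧ ∀ e ∈ M, v ∉ e), x v

/-- `OPT G w x S` is the maximal monomer-dimer weight over matchings of the induced weighted
subgraph of `G` on `S`. -/
noncomputable def OPT {V : Type*} [Fintype V] (G : SimpleGraph V) (w : Sym2 V → ℝ)
    (x : V → ℝ) (S : Set V) : ℝ :=
  sSup {r | ∃ M, IsMatchingOn G S M ∧ MDweight w x S M = r}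

/-- `M` is an optimal monomer-dimer configuration of the induced weighted subgraph on `S`. -/
def IsOptimalOn {V : Type*} [Fintype V] (G : SimpleGraph V) (w : Sym2 V → ℝ) (x : V → ℝ)
    (S : Set V) (M : Finset (Sym2 V)) : Prop :=
  IsMatchingOn G S M ∧ ∀ M', IsMatchingOn G S M' → MDweight w x S M' ≤ MDweight w x S M


/-- The message of the ordered pair `(u,v)` of adjacent vertices of a finite weighted tree:
`Z(u,v) = OPT(T_(u,v)) - OPT(T_(u,v) - v)`, where `T_(u,v)` is the connected component of
`T - {u,v}` containing `v`. -/
noncomputable def Zmsg {V : Type*} [Fintype V] (G : SimpleGraph V) (w : Sym2 V → ℝ)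
    (x : V → ℝ) (u v : V) : ℝ :=
  OPT (G.deleteEdges {s(u,v)}) w x {a | (G.deleteEdges {s(u,v)}).Reachable v a} -
    OPT (G.deleteEdges {s(u,v)}) w x ({a | (G.deleteEdges {s(u,v)}).Reachable v a} \ {v})


/-!
Write `T(u,v)` for `subtree G u v`, the component of `v` in `G - uv`. In a tree `u ∉ T(u,v)`,
so deleting the edge `uv` changes no `OPT` on subsets of `T(u,v)` and
`Z(u,v) = OPT(T(u,v)) - OPT(T(u,v) - v)` can be computed in `G` itself. Splitting an optimal
configuration of `S = T(u,v)` according to whether `v` is a monomer or is matched to some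
neighbour `b ∈ S` gives
`OPT(S) = max (x v + OPT(S - v)) (max_b (w(v,b) + OPT(S - {v,b})))`.
For a neighbour `u' ≠ u` of `v`, the set `S - v` is the disjoint union of `T(v,u')` and a part
with no edges to it; `OPT` is additive over such splittings, so removing `u'` from `S - v`
lowers `OPT` by exactly `Z(v,u')`. Subtracting `OPT(S - v)` from the recursion gives the claim.
-/

section Matching

variable {V : Type*} {G : SimpleGraph V} {S A B : Set V} {M M' : Finset (Sym2 V)} {a b : V}

lemma IsMatchingOn.empty (G : SimpleGraph V) (S : Set V) : IsMatchingOn G S ∅ := by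
  constructor <;> simp

lemma IsMatchingOn.restrict (hM : IsMatchingOn G S M) (hM' : M' ⊆ M)
    (hA : ∀ e ∈ M', ∀ v ∈ e, v ∈ A) : IsMatchingOn G A M' :=
  ⟨fun e he => ⟨(hM.1 e (hM' he)).1, hA e he⟩, fun e he f hf => hM.2 e (hM' he) f (hM' hf)⟩

lemma IsMatchingOn.mono (hM : IsMatchingOn G S M) (hSA : S ⊆ A) : IsMatchingOn G A M :=
  hM.restrict subset_rfl fun e he v hv => hSA ((hM.1 e he).2 v hv)

lemma IsMatchingOn.union (hAB : Disjoint A B) (hA : IsMatchingOn G A M)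
    (hB : IsMatchingOn G B M') : IsMatchingOn G (A ∪ B) (M ∪ M') := by
  refine ⟨fun e he => ?_, fun e he f hf hef v hve hvf => ?_⟩
  · rcases Finset.mem_union.mp he with he | he
    · exact ⟨(hA.1 e he).1, fun v hv => Or.inl ((hA.1 e he).2 v hv)⟩
    · exact ⟨(hB.1 e he).1, fun v hv => Or.inr ((hB.1 e he).2 v hv)⟩
  · rcases Finset.mem_union.mp he with he | he <;> rcases Finset.mem_union.mp hf with hf | hf
    · exact hA.2 e he f hf hef v hve hvf
    · exact hAB.ne_of_mem ((hA.1 e he).2 v hve) ((hB.1 f hf).2 v hvf) rfl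
    · exact hAB.ne_of_mem ((hA.1 f hf).2 v hvf) ((hB.1 e he).2 v hve) rfl
    · exact hB.2 e he f hf hef v hve hvf

lemma IsMatchingOn.insert_edge (hM : IsMatchingOn G (S \ {a, b}) M) (hab : G.Adj a b)
    (ha : a ∈ S) (hb : b ∈ S) : IsMatchingOn G S (insert s(a,b) M) := by
  have hM_verts : ∀ e ∈ M, ∀ v ∈ e, v ∈ S ∧ v ≠ a ∧ v ≠ b := fun e he v hv => by
    simpa [and_assoc] using (hM.1 e he).2 v hv
  refine ⟨fun e he => ?_, fun e he f hf hef v hve hvf => ?_⟩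
  · rcases Finset.mem_insert.mp he with rfl | he
    · exact ⟨hab, by simp [ha, hb]⟩
    · exact ⟨(hM.1 e he).1, fun v hv => (hM_verts e he v hv).1⟩
  · rcases Finset.mem_insert.mp he with rfl | he <;> rcases Finset.mem_insert.mp hf with rfl | hf
    · exact hef rfl
    · have := hM_verts f hf v hvf
      rcases Sym2.mem_iff.mp hve with rfl | rfl <;> tauto
    · have := hM_verts e he v hve
      rcases Sym2.mem_iff.mp hvf with rfl | rfl <;> tauto
    · exact hM.2 e he f hf hef v hve hvf

lemma IsMatchingOn.erase_edge (hM : IsMatchingOn G S M) (h : s(a,b) ∈ M) :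
    IsMatchingOn G (S \ {a, b}) (M.erase s(a,b)) := by
  refine hM.restrict (Finset.erase_subset _ _) fun e he v hv => ?_
  have hne : s(a,b) ≠ e := (Finset.ne_of_mem_erase he).symm
  have heM : e ∈ M := Finset.mem_of_mem_erase he
  have hva : v ≠ a := by rintro rfl; exact hM.2 _ h e heM hne v (by simp) hv
  have hvb : v ≠ b := by rintro rfl; exact hM.2 _ h e heM hne v (by simp) hv
  simp [(hM.1 e heM).2 v hv, hva, hvb]

end Matching

section Weight

variable {V : Type*} [Fintype V] {w : Sym2 V → ℝ} {x : V → ℝ} {S A B : Set V}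
  {M M' : Finset (Sym2 V)} {a b v : V}

noncomputable def monomers (S : Set V) (M : Finset (Sym2 V)) : Finset V :=
  Finset.univ.filter (fun v => v ∈ S ∧ ∀ e ∈ M, v ∉ e)

@[simp]
lemma mem_monomers : v ∈ monomers S M ↔ v ∈ S ∧ ∀ e ∈ M, v ∉ e := by
  simp [monomers]

lemma MDweight_eq_sum_monomers :
    MDweight w x S M = ∑ e ∈ M, w e + ∑ v ∈ monomers S M, x v := rfl

lemma MDweight_eq_add_sdiff (hv : v ∈ S) (hM : ∀ e ∈ M, v ∉ e) :
    MDweight w x S M = x v + MDweight w x (S \ {v}) M := by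
  have hmono : monomers S M = insert v (monomers (S \ {v}) M) := by
    ext c
    by_cases hc : c = v
    · subst hc; simpa [hv] using hM
    · simp [hc]
  rw [MDweight_eq_sum_monomers, MDweight_eq_sum_monomers, hmono,
    Finset.sum_insert (by simp)]
  ring

lemma MDweight_insert (h : s(a,b) ∉ M) :
    MDweight w x S (insert s(a,b) M) = w s(a,b) + MDweight w x (S \ {a, b}) M := by
  have hmono : monomers S (insert s(a,b) M) = monomers (S \ {a, b}) M := by
    ext c
    simp only [mem_monomers, Finset.forall_mem_insert, Sym2.mem_iff, Set.mem_sdiff,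
      Set.mem_insert_iff, Set.mem_singleton_iff]
    tauto
  rw [MDweight_eq_sum_monomers, MDweight_eq_sum_monomers, hmono, Finset.sum_insert h]
  ring

lemma MDweight_union (hAB : Disjoint A B) (hA : ∀ e ∈ M, ∀ v ∈ e, v ∈ A)
    (hB : ∀ e ∈ M', ∀ v ∈ e, v ∈ B) :
    MDweight w x (A ∪ B) (M ∪ M') = MDweight w x A M + MDweight w x B M' := by
  have hedges : Disjoint M M' := Finset.disjoint_left.mpr fun e he he' => by
    induction e with
    | h p q => exact hAB.ne_of_mem (hA _ he p (by simp)) (hB _ he' p (by simp)) rfl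
  have hmono : monomers (A ∪ B) (M ∪ M') = monomers A M ∪ monomers B M' := by
    ext c
    simp only [mem_monomers, Finset.mem_union, Set.mem_union]
    constructor
    · rintro ⟨hc | hc, hunc⟩
      · exact Or.inl ⟨hc, fun e he => hunc e (Or.inl he)⟩
      · exact Or.inr ⟨hc, fun e he => hunc e (Or.inr he)⟩
    · rintro (⟨hc, hunc⟩ | ⟨hc, hunc⟩)
      · exact ⟨Or.inl hc, fun e he => he.elim (hunc e)
          fun he hce => hAB.ne_of_mem hc (hB e he c hce) rfl⟩
      · exact ⟨Or.inr hc, fun e he => he.elim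
          (fun he hce => hAB.ne_of_mem (hA e he c hce) hc rfl) (hunc e)⟩
  have hmonos : Disjoint (monomers A M) (monomers B M') :=
    Finset.disjoint_left.mpr fun c hcA hcB =>
      hAB.ne_of_mem (mem_monomers.mp hcA).1 (mem_monomers.mp hcB).1 rfl
  rw [MDweight_eq_sum_monomers, MDweight_eq_sum_monomers, MDweight_eq_sum_monomers,
    Finset.sum_union hedges, hmono, Finset.sum_union hmonos]
  ring

end Weight

section Optimum

variable {V : Type*} [Fintype V] {G G' : SimpleGraph V} {w : Sym2 V → ℝ} {x : V → ℝ}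
  {S A B C : Set V} {M : Finset (Sym2 V)} {v : V}

lemma finite_matching_weights (G : SimpleGraph V) (w : Sym2 V → ℝ) (x : V → ℝ) (S : Set V) :
    {r | ∃ M, IsMatchingOn G S M ∧ MDweight w x S M = r}.Finite :=
  (Set.finite_range (MDweight w x S)).subset <| by
    rintro _ ⟨M, -, rfl⟩
    exact Set.mem_range_self M

lemma nonempty_matching_weights (G : SimpleGraph V) (w : Sym2 V → ℝ) (x : V → ℝ)
    (S : Set V) : {r | ∃ M, IsMatchingOn G S M ∧ MDweight w x S M = r}.Nonempty :=
  ⟨_, ∅, IsMatchingOn.empty G S, rfl⟩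

lemma le_OPT (hM : IsMatchingOn G S M) : MDweight w x S M ≤ OPT G w x S :=
  le_csSup (finite_matching_weights G w x S).bddAbove ⟨M, hM, rfl⟩

lemma OPT_le {c : ℝ} (h : ∀ M, IsMatchingOn G S M → MDweight w x S M ≤ c) :
    OPT G w x S ≤ c :=
  csSup_le (nonempty_matching_weights G w x S) fun _ ⟨M, hM, hr⟩ => hr ▸ h M hM

lemma exists_MDweight_eq_OPT (G : SimpleGraph V) (w : Sym2 V → ℝ) (x : V → ℝ) (S : Set V) :
    ∃ M, IsMatchingOn G S M ∧ MDweight w x S M = OPT G w x S :=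
  (nonempty_matching_weights G w x S).csSup_mem (finite_matching_weights G w x S)

lemma OPT_congr (h : ∀ a ∈ S, ∀ b ∈ S, (G.Adj a b ↔ G'.Adj a b)) :
    OPT G w x S = OPT G' w x S := by
  have hedge : ∀ e : Sym2 V, (∀ v ∈ e, v ∈ S) → (e ∈ G.edgeSet ↔ e ∈ G'.edgeSet) := by
    intro e he
    induction e with
    | h a b => exact h a (he a (by simp)) b (he b (by simp))
  have hmatch : ∀ M, IsMatchingOn G S M ↔ IsMatchingOn G' S M := fun M =>
    and_congr_left fun _ => forall₂_congr fun e _ =>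
      ⟨fun ⟨hG, hS⟩ => ⟨(hedge e hS).mp hG, hS⟩, fun ⟨hG, hS⟩ => ⟨(hedge e hS).mpr hG, hS⟩⟩
  simp only [OPT, hmatch]

lemma OPT_union (hAB : Disjoint A B) (hsep : ∀ a ∈ A, ∀ b ∈ B, ¬ G.Adj a b) :
    OPT G w x (A ∪ B) = OPT G w x A + OPT G w x B := by
  refine le_antisymm (OPT_le fun M hM => ?_) ?_
  · have hsplit : ∀ e ∈ M, (∀ v ∈ e, v ∈ A) ∨ (∀ v ∈ e, v ∈ B) := by
      intro e he
      induction e with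
      | h p q =>
        have hpq : G.Adj p q := (hM.1 _ he).1
        rcases (hM.1 _ he).2 p (by simp) with hp | hp <;>
          rcases (hM.1 _ he).2 q (by simp) with hq | hq
        · exact Or.inl (by simp [hp, hq])
        · exact absurd hpq (hsep p hp q hq)
        · exact absurd hpq.symm (hsep q hq p hp)
        · exact Or.inr (by simp [hp, hq])
    set MA := M.filter (fun e => ∀ v ∈ e, v ∈ A)
    set MB := M.filter (fun e => ¬ ∀ v ∈ e, v ∈ A)
    have hMA : ∀ e ∈ MA, ∀ v ∈ e, v ∈ A := fun e he => (Finset.mem_filter.mp he).2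
    have hMB : ∀ e ∈ MB, ∀ v ∈ e, v ∈ B := fun e he =>
      (hsplit e (Finset.mem_filter.mp he).1).resolve_left (Finset.mem_filter.mp he).2
    calc MDweight w x (A ∪ B) M = MDweight w x (A ∪ B) (MA ∪ MB) := by
          rw [Finset.filter_union_filter_not_eq]
      _ = MDweight w x A MA + MDweight w x B MB := MDweight_union hAB hMA hMB
      _ ≤ OPT G w x A + OPT G w x B :=
          add_le_add (le_OPT (hM.restrict (Finset.filter_subset _ _) hMA))
            (le_OPT (hM.restrict (Finset.filter_subset _ _) hMB))
  · obtain ⟨MA, hMA, hwA⟩ := exists_MDweight_eq_OPT G w x A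
    obtain ⟨MB, hMB, hwB⟩ := exists_MDweight_eq_OPT G w x B
    rw [← hwA, ← hwB, ← MDweight_union hAB (fun e he => (hMA.1 e he).2)
      (fun e he => (hMB.1 e he).2)]
    exact le_OPT (hMA.union hAB hMB)

lemma OPT_sub_OPT_sdiff_of_separated (hCA : C ⊆ A)
    (hsep : ∀ a ∈ C, ∀ b ∈ A \ C, ¬ G.Adj a b) (hv : v ∈ C) :
    OPT G w x A - OPT G w x (A \ {v}) = OPT G w x C - OPT G w x (C \ {v}) := by
  have hA : A = C ∪ (A \ C) := (Set.union_sdiff_cancel hCA).symm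
  have hAv : A \ {v} = (C \ {v}) ∪ (A \ C) := by
    conv_lhs => rw [hA]
    rw [Set.union_sdiff_distrib, Set.sdiff_singleton_eq_self (s := A \ C) fun h => h.2 hv]
  have hOPT_A := OPT_union (w := w) (x := x) Set.disjoint_sdiff_right hsep
  rw [← hA] at hOPT_A
  rw [hAv, OPT_union (Set.disjoint_sdiff_right.mono_left Set.sdiff_subset)
    fun a ha b hb => hsep a ha.1 b hb, hOPT_A]
  ring

lemma add_OPT_sdiff_le_OPT (hv : v ∈ S) : x v + OPT G w x (S \ {v}) ≤ OPT G w x S := by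
  obtain ⟨M, hM, hwM⟩ := exists_MDweight_eq_OPT G w x (S \ {v})
  have hunc : ∀ e ∈ M, v ∉ e := fun e he hve => ((hM.1 e he).2 v hve).2 rfl
  rw [← hwM, ← MDweight_eq_add_sdiff hv hunc]
  exact le_OPT (hM.mono Set.sdiff_subset)

lemma add_OPT_subtree_sdiff_pair_le_OPT {b : V} (hvb : G.Adj v b) (hv : v ∈ S) (hb : b ∈ S) :
    w s(v,b) + OPT G w x (S \ {v, b}) ≤ OPT G w x S := by
  obtain ⟨M, hM, hwM⟩ := exists_MDweight_eq_OPT G w x (S \ {v, b})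
  have hnotin : s(v,b) ∉ M := fun h => ((hM.1 _ h).2 v (by simp)).2 (by simp)
  rw [← hwM, ← MDweight_insert hnotin]
  exact le_OPT (hM.insert_edge hvb hv hb)

lemma OPT_le_or_exists_adj (hv : v ∈ S) :
    OPT G w x S ≤ x v + OPT G w x (S \ {v}) ∨
      ∃ b, G.Adj v b ∧ b ∈ S ∧ OPT G w x S ≤ w s(v,b) + OPT G w x (S \ {v, b}) := by
  obtain ⟨M, hM, hwM⟩ := exists_MDweight_eq_OPT G w x S
  rw [← hwM]
  by_cases hunc : ∀ e ∈ M, v ∉ e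
  · left
    rw [MDweight_eq_add_sdiff hv hunc]
    refine (add_le_add_iff_left _).mpr (le_OPT (hM.restrict subset_rfl fun e he c hc => ?_))
    exact ⟨(hM.1 e he).2 c hc, by rintro rfl; exact hunc e he hc⟩
  · right
    push Not at hunc
    obtain ⟨e, he, hve⟩ := hunc
    obtain ⟨b, rfl⟩ : ∃ b, s(v,b) = e := ⟨_, Sym2.other_spec hve⟩
    refine ⟨b, (hM.1 _ he).1, (hM.1 _ he).2 b (by simp), ?_⟩
    rw [← Finset.insert_erase he, MDweight_insert (Finset.notMem_erase _ _)]
    exact (add_le_add_iff_left _).mpr (le_OPT (hM.erase_edge he))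

end Optimum

section Tree

variable {V : Type*} {G : SimpleGraph V} {u v u' a b : V}

def subtree (G : SimpleGraph V) (u v : V) : Set V :=
  {a | (G.deleteEdges {s(u,v)}).Reachable v a}

lemma self_mem_subtree : v ∈ subtree G u v := SimpleGraph.Reachable.refl v

lemma mem_subtree_of_adj (h : G.Adj v u') (hne : u' ≠ u) : u' ∈ subtree G u v := by
  refine SimpleGraph.Adj.reachable (SimpleGraph.deleteEdges_adj.mpr ⟨h, ?_⟩)
  rw [Set.mem_singleton_iff, Sym2.eq_iff]
  rintro (⟨rfl, rfl⟩ | ⟨-, rfl⟩) <;> exact hne rfl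

lemma not_adj_of_mem_subtree (ha : a ∈ subtree G u v) (hb : b ∉ subtree G u v) (hbu : b ≠ u) :
    ¬ G.Adj a b := by
  intro hab
  refine hb (SimpleGraph.Reachable.trans ha
    (SimpleGraph.Adj.reachable (SimpleGraph.deleteEdges_adj.mpr ⟨hab, ?_⟩)))
  rw [Set.mem_singleton_iff, Sym2.eq_iff]
  rintro (⟨-, rfl⟩ | ⟨-, rfl⟩)
  exacts [hb self_mem_subtree, hbu rfl]

lemma SimpleGraph.IsTree.notMem_subtree (hT : G.IsTree) (h : G.Adj u v) :
    u ∉ subtree G u v := fun hu =>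
  SimpleGraph.isBridge_iff.mp (SimpleGraph.isAcyclic_iff_forall_adj_isBridge.mp hT.isAcyclic h)
    hu.symm

lemma SimpleGraph.IsTree.subtree_subset (hT : G.IsTree) (hvu' : G.Adj v u') (hne : u' ≠ u) :
    subtree G v u' ⊆ subtree G u v \ {v} := by
  intro a ha
  have hv : v ∉ subtree G v u' := hT.notMem_subtree hvu'
  refine ⟨SimpleGraph.Reachable.trans (mem_subtree_of_adj hvu' hne) ?_,
    fun hav => hv (hav ▸ ha)⟩
  obtain ⟨p, hp⟩ := SimpleGraph.reachable_deleteEdges_iff_exists_walk.mp ha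
  refine SimpleGraph.reachable_deleteEdges_iff_exists_walk.mpr ⟨p, fun huv => hv ?_⟩
  exact SimpleGraph.reachable_deleteEdges_iff_exists_walk.mpr
    ⟨p.takeUntil v (p.snd_mem_support_of_mem_edges huv),
      fun h => hp (p.edges_takeUntil_subset_edges _ h)⟩

end Tree

section Message

variable {V : Type*} [Fintype V] {G : SimpleGraph V} {w : Sym2 V → ℝ} {x : V → ℝ} {u v u' : V}

lemma SimpleGraph.IsTree.Zmsg_eq_OPT_subtree (hT : G.IsTree) (h : G.Adj u v) :
    Zmsg G w x u v = OPT G w x (subtree G u v) - OPT G w x (subtree G u v \ {v}) := by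
  have hcongr : ∀ T ⊆ subtree G u v, OPT (G.deleteEdges {s(u,v)}) w x T = OPT G w x T :=
    fun T hTsub => OPT_congr fun a ha b hb => by
      rw [SimpleGraph.deleteEdges_adj, Set.mem_singleton_iff]
      refine and_iff_left_of_imp fun _ hab => hT.notMem_subtree h ?_
      rcases Sym2.mem_iff.mp (hab ▸ Sym2.mem_mk_left u v : u ∈ s(a,b)) with rfl | rfl
      exacts [hTsub ha, hTsub hb]
  exact congr_arg₂ _ (hcongr _ subset_rfl) (hcongr _ Set.sdiff_subset)

lemma SimpleGraph.IsTree.OPT_subtree_sdiff_pair (hT : G.IsTree) (hvu' : G.Adj v u') (hne : u' ≠ u) :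
    OPT G w x (subtree G u v \ {v, u'}) = OPT G w x (subtree G u v \ {v}) - Zmsg G w x v u' := by
  have h := OPT_sub_OPT_sdiff_of_separated (G := G) (w := w) (x := x)
    (hT.subtree_subset hvu' hne)
    (fun a ha b hb => not_adj_of_mem_subtree ha hb.2 fun hbv => hb.1.2 hbv) self_mem_subtree
  rw [← hT.Zmsg_eq_OPT_subtree hvu', Set.sdiff_sdiff, Set.singleton_union] at h
  linarith

lemma SimpleGraph.IsTree.le_Zmsg (hT : G.IsTree) (h : G.Adj u v) : x v ≤ Zmsg G w x u v := by
  have := add_OPT_sdiff_le_OPT (G := G) (w := w) (x := x) (self_mem_subtree (G := G) (u := u) (v := v))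
  rw [hT.Zmsg_eq_OPT_subtree h]
  linarith

lemma SimpleGraph.IsTree.sub_Zmsg_le_Zmsg (hT : G.IsTree) (h : G.Adj u v) (hvu' : G.Adj v u')
    (hne : u' ≠ u) : w s(v,u') - Zmsg G w x v u' ≤ Zmsg G w x u v := by
  have := add_OPT_subtree_sdiff_pair_le_OPT (w := w) (x := x) hvu' self_mem_subtree
    (mem_subtree_of_adj hvu' hne)
  rw [hT.OPT_subtree_sdiff_pair hvu' hne] at this
  rw [hT.Zmsg_eq_OPT_subtree h]
  linarith

lemma SimpleGraph.IsTree.Zmsg_le (hT : G.IsTree) (h : G.Adj u v) :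
    Zmsg G w x u v ≤ x v ∨
      ∃ u', G.Adj v u' ∧ u' ≠ u ∧ Zmsg G w x u v ≤ w s(v,u') - Zmsg G w x v u' := by
  rw [hT.Zmsg_eq_OPT_subtree h]
  rcases OPT_le_or_exists_adj (G := G) (w := w) (x := x) (self_mem_subtree (G := G) (u := u) (v := v))
    with hle | ⟨b, hvb, hb, hle⟩
  · left; linarith
  · have hbu : b ≠ u := fun hbu => hT.notMem_subtree h (hbu ▸ hb)
    rw [hT.OPT_subtree_sdiff_pair hvb hbu] at hle
    exact Or.inr ⟨b, hvb, hbu, by linarith⟩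

end Message

/-- On a finite weighted tree, the messages satisfy the recursion
`Z(u,v) = max (x v) (max_{u' ∼ v, u' ≠ u} (w(v,u') - Z(v,u')))`, the inner maximum over an
empty set being `-∞` (computed in `EReal`, so that `Z(u,v) = x v` when `u` is the only
neighbour of `v`). -/
theorem stmt3 {V : Type*} [Fintype V] (G : SimpleGraph V) (hT : G.IsTree)
    (w : Sym2 V → ℝ) (x : V → ℝ) :
    ∀ u v, G.Adj u v →
      ((Zmsg G w x u v : ℝ) : EReal) =
        max ((x v : ℝ) : EReal)
          (sSup {r : EReal | ∃ u', G.Adj v u' ∧ u' ≠ u ∧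
            r = ((w s(v,u') : ℝ) : EReal) - ((Zmsg G w x v u' : ℝ) : EReal)}) := by
  intro u v h
  refine le_antisymm ?_ (max_le (EReal.coe_le_coe (hT.le_Zmsg h)) (sSup_le ?_))
  · rcases hT.Zmsg_le (w := w) (x := x) h with hle | ⟨u', hvu', hne, hle⟩
    · exact (EReal.coe_le_coe hle).trans (le_max_left _ _)
    · refine (EReal.coe_le_coe hle).trans (le_trans ?_ (le_max_right _ _))
      exact le_sSup ⟨u', hvu', hne, EReal.coe_sub _ _⟩
  · rintro r ⟨u', hvu', hne, rfl⟩
    rw [← EReal.coe_sub]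
    exact EReal.coe_le_coe (hT.sub_Zmsg_le_Zmsg h hvu' hne)
end

section
/- Let (T,o) be a locally finite rooted tree with edge weights w and vertex weights x, let m ∈ ℝ, and assume x(v) ≥ m for every vertex v. For H ≥ 1, let Z_m^H and Z_∞^H denote the H-message families on B_H(T,o) whose boundary values are all equal to m and all equal to +∞, respectively. Fix a neighbour v of o and let I_H ⊆ ℝ ∪ {+∞} be the closed interval with endpoints Z_m^H(o,v) and Z_∞^H(o,v). Then: (a) for every H-message family Z whose boundary values all lie in [m, +∞], one has Z(o,v) ∈ I_H; and (b) the intervals are nested: I_{H+1} ⊆ I_H for every H ≥ 1. -/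
/-!
The message recursion is antitone in the incoming messages, so raising the boundary values
raises the messages at even height above the boundary and lowers those at odd height. Hence a
family with boundary values in `[m, ∞]` is squeezed, with alternating orientation, between the
families with boundary values `m` and `∞`. For the nesting, an `(H+1)`-message family restricted
to `B_H(T,o)` is an `H`-message family whose boundary values are maxima with some `x v ≥ m`,
so they lie in `[m, ∞]`.
-/

/-- `Z` is an `H`-message family on the ball `B_H(T,o)` with boundary values `b`:
on boundary pairs (ordered pairs `(u,v)` of adjacent vertices of the ball with `v` at
distance exactly `H` from `o`), `Z(u,v) = b(u,v)`, and on every other ordered pair of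
adjacent vertices of the ball, `Z(u,v) = max (x v) (max_{u' ∼ v, u' ≠ u} (w(v,u') - Z(v,u')))`
(computed in `EReal`, with the conventions `w - (+∞) = -∞` and empty maximum `= -∞`). -/
def IsMsgFamily {V : Type*} (G : SimpleGraph V) (w : Sym2 V → ℝ) (x : V → ℝ) (o : V) (H : ℕ)
    (b : V → V → EReal) (Z : V → V → EReal) : Prop :=
  (∀ u v, G.Adj u v → G.dist o u ≤ H → G.dist o v = H → Z u v = b u v) ∧
  (∀ u v, G.Adj u v → G.dist o u ≤ H → G.dist o v < H →
    Z u v = max ((x v : ℝ) : EReal)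
      (sSup {r : EReal | ∃ u', G.Adj v u' ∧ u' ≠ u ∧ G.dist o u' ≤ H ∧
        r = ((w s(v,u') : ℝ) : EReal) - Z v u'}))

namespace SimpleGraph

variable {V : Type*} {G : SimpleGraph V}

/-- Both `u` and `u'` are the penultimate vertex of the unique path from `o` to `v`. -/
lemma IsTree.eq_of_adj_of_dist_add_one_eq (hT : G.IsTree) {o u u' v : V}
    (h : G.Adj u v) (h' : G.Adj u' v)
    (hd : G.dist o u + 1 = G.dist o v) (hd' : G.dist o u' + 1 = G.dist o v) : u = u' := by
  obtain ⟨p, hp⟩ := hT.connected.exists_walk_length_eq_dist o u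
  obtain ⟨p', hp'⟩ := hT.connected.exists_walk_length_eq_dist o u'
  have hpath : (p.concat h).IsPath :=
    (p.concat h).isPath_of_length_eq_dist (by rw [Walk.length_concat, hp, hd])
  have hpath' : (p'.concat h').IsPath :=
    (p'.concat h').isPath_of_length_eq_dist (by rw [Walk.length_concat, hp', hd'])
  have hsame := (hT.isAcyclic.subsingleton_path o v).elim ⟨_, hpath⟩ ⟨_, hpath'⟩
  simpa only [Walk.penultimate_concat] using
    congrArg (fun q : G.Path o v => q.1.penultimate) hsame

lemma IsTree.dist_eq_dist_add_one_of_adj_of_ne (hT : G.IsTree) {o u u' v : V}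
    (h : G.Adj u v) (hd : G.dist o u + 1 = G.dist o v) (h' : G.Adj v u') (hne : u' ≠ u) :
    G.dist o u' = G.dist o v + 1 :=
  (hT.dist_eq_dist_add_one_of_adj o h').resolve_left fun hd' =>
    hne (hT.eq_of_adj_of_dist_add_one_eq h'.symm h hd'.symm hd)

end SimpleGraph

namespace IsMsgFamily

variable {V : Type*} {G : SimpleGraph V} {w : Sym2 V → ℝ} {x : V → ℝ} {o : V} {H : ℕ}

lemma coe_le {b Z : V → V → EReal} (hZ : IsMsgFamily G w x o H b Z) {u v : V}
    (h : G.Adj u v) (hu : G.dist o u ≤ H) (hv : G.dist o v < H) : (x v : EReal) ≤ Z u v := by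
  rw [hZ.2 u v h hu hv]
  exact le_max_left _ _

lemma le_of_forall_child_ge {b b' Z Z' : V → V → EReal} (hZ : IsMsgFamily G w x o H b Z)
    (hZ' : IsMsgFamily G w x o H b' Z') {u v : V}
    (h : G.Adj u v) (hu : G.dist o u ≤ H) (hv : G.dist o v < H)
    (hchild : ∀ u', G.Adj v u' → u' ≠ u → G.dist o u' ≤ H → Z' v u' ≤ Z v u') :
    Z u v ≤ Z' u v := by
  rw [hZ.2 u v h hu hv, hZ'.2 u v h hu hv]
  refine max_le_max le_rfl (sSup_le ?_)
  rintro _ ⟨u', h₁, h₂, h₃, rfl⟩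
  exact le_sSup_of_le ⟨u', h₁, h₂, h₃, rfl⟩
    (EReal.sub_le_sub le_rfl (hchild u' h₁ h₂ h₃))

/-- Here `k` is the height of the edge `(u, v)` above the boundary of `B_H(T,o)`. -/
lemma alternating_le_of_boundary_le (hT : G.IsTree) {b b' Z Z' : V → V → EReal}
    (hZ : IsMsgFamily G w x o H b Z) (hZ' : IsMsgFamily G w x o H b' Z')
    (hb : ∀ u v, G.Adj u v → G.dist o u ≤ H → G.dist o v = H → b u v ≤ b' u v)
    (k : ℕ) : ∀ {u v}, G.Adj u v → G.dist o u + 1 = G.dist o v → G.dist o v + k = H →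
      (Even k → Z u v ≤ Z' u v) ∧ (Odd k → Z' u v ≤ Z u v) := by
  induction k with
  | zero =>
    intro u v h hd hk
    refine ⟨fun _ => ?_, fun hodd => absurd hodd Nat.not_odd_zero⟩
    rw [hZ.1 u v h (by omega) (by omega), hZ'.1 u v h (by omega) (by omega)]
    exact hb u v h (by omega) (by omega)
  | succ k ih =>
    intro u v h hd hk
    have hu : G.dist o u ≤ H := by omega
    have hv : G.dist o v < H := by omega
    have hchild : ∀ u', G.Adj v u' → u' ≠ u →
        G.dist o v + 1 = G.dist o u' ∧ G.dist o u' + k = H := fun u' h' hne => by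
      have := hT.dist_eq_dist_add_one_of_adj_of_ne h hd h' hne
      omega
    refine ⟨fun heven => hZ.le_of_forall_child_ge hZ' h hu hv fun u' h' hne _ => ?_,
      fun hodd => hZ'.le_of_forall_child_ge hZ h hu hv fun u' h' hne _ => ?_⟩
    · obtain ⟨hd', hk'⟩ := hchild u' h' hne
      exact (ih h' hd' hk').2 (Nat.not_even_iff_odd.mp (Nat.even_add_one.mp heven))
    · obtain ⟨hd', hk'⟩ := hchild u' h' hne
      exact (ih h' hd' hk').1 (Nat.not_odd_iff_even.mp (Nat.odd_add_one.mp hodd))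

lemma mem_uIcc_of_boundary_le (hT : G.IsTree) {b₁ b b₂ Z₁ Z Z₂ : V → V → EReal}
    (hZ₁ : IsMsgFamily G w x o H b₁ Z₁) (hZ : IsMsgFamily G w x o H b Z)
    (hZ₂ : IsMsgFamily G w x o H b₂ Z₂)
    (hb₁ : ∀ u v, G.Adj u v → G.dist o u ≤ H → G.dist o v = H → b₁ u v ≤ b u v)
    (hb₂ : ∀ u v, G.Adj u v → G.dist o u ≤ H → G.dist o v = H → b u v ≤ b₂ u v)
    {u v : V} (h : G.Adj u v) (hd : G.dist o u + 1 = G.dist o v) (hv : G.dist o v ≤ H) :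
    Z u v ∈ Set.uIcc (Z₁ u v) (Z₂ u v) := by
  obtain ⟨k, hk⟩ : ∃ k, G.dist o v + k = H := ⟨H - G.dist o v, by omega⟩
  have h₁ := hZ₁.alternating_le_of_boundary_le hT hZ hb₁ k h hd hk
  have h₂ := hZ.alternating_le_of_boundary_le hT hZ₂ hb₂ k h hd hk
  rcases Nat.even_or_odd k with heven | hodd
  · exact Set.mem_uIcc_of_le (h₁.1 heven) (h₂.1 heven)
  · exact Set.mem_uIcc_of_ge (h₂.2 hodd) (h₁.2 hodd)

lemma restrict {b Z : V → V → EReal} (hZ : IsMsgFamily G w x o (H + 1) b Z) :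
    IsMsgFamily G w x o H Z Z := by
  refine ⟨fun _ _ _ _ _ => rfl, fun u v h hu hv => ?_⟩
  rw [hZ.2 u v h (by omega) (by omega)]
  congr 2
  ext r
  constructor
  · rintro ⟨u', h₁, h₂, -, rfl⟩
    have hstep : G.dist o u' ≤ G.dist o v + G.dist v u' := h₁.reachable.dist_triangle_right o
    rw [SimpleGraph.dist_eq_one_iff_adj.mpr h₁] at hstep
    exact ⟨u', h₁, h₂, by omega, rfl⟩
  · rintro ⟨u', h₁, h₂, h₃, rfl⟩
    exact ⟨u', h₁, h₂, by omega, rfl⟩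

end IsMsgFamily

theorem stmt8_general {V : Type*} (G : SimpleGraph V) (hT : G.IsTree)
    (w : Sym2 V → ℝ) (x : V → ℝ) (o : V) (m : ℝ) (hx : ∀ v, m ≤ x v)
    (Zm Zi : ℕ → V → V → EReal)
    (hZm : ∀ H, 1 ≤ H → IsMsgFamily G w x o H (fun _ _ => ((m : ℝ) : EReal)) (Zm H))
    (hZi : ∀ H, 1 ≤ H → IsMsgFamily G w x o H (fun _ _ => (⊤ : EReal)) (Zi H)) :
    ∀ v, G.Adj o v → ∀ H, 1 ≤ H →
      ((∀ b Z : V → V → EReal,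
          (∀ u u', G.Adj u u' → G.dist o u ≤ H → G.dist o u' = H →
            ((m : ℝ) : EReal) ≤ b u u') →
          IsMsgFamily G w x o H b Z →
          Z o v ∈ Set.Icc (min (Zm H o v) (Zi H o v)) (max (Zm H o v) (Zi H o v))) ∧
        Set.Icc (min (Zm (H+1) o v) (Zi (H+1) o v)) (max (Zm (H+1) o v) (Zi (H+1) o v)) ⊆
          Set.Icc (min (Zm H o v) (Zi H o v)) (max (Zm H o v) (Zi H o v))) := by
  intro v hov H hH
  have hdv : G.dist o v = 1 := SimpleGraph.dist_eq_one_iff_adj.mpr hov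
  have bracket : ∀ b Z : V → V → EReal,
      (∀ u u', G.Adj u u' → G.dist o u ≤ H → G.dist o u' = H →
        ((m : ℝ) : EReal) ≤ b u u') →
      IsMsgFamily G w x o H b Z → Z o v ∈ Set.uIcc (Zm H o v) (Zi H o v) :=
    fun b Z hb hZ => (hZm H hH).mem_uIcc_of_boundary_le hT hZ (hZi H hH) hb
      (fun _ _ _ _ _ => le_top) hov (by simp [hdv]) (by omega)
  have boundary_ge : ∀ {b Z : V → V → EReal}, IsMsgFamily G w x o (H + 1) b Z →
      ∀ u u', G.Adj u u' → G.dist o u ≤ H → G.dist o u' = H →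
        ((m : ℝ) : EReal) ≤ Z u u' :=
    fun hZ u u' h hu hu' =>
      (EReal.coe_le_coe_iff.mpr (hx u')).trans (hZ.coe_le h (by omega) (by omega))
  have hZm' := hZm (H + 1) (by omega)
  have hZi' := hZi (H + 1) (by omega)
  exact ⟨bracket, Set.uIcc_subset_uIcc (bracket _ _ (boundary_ge hZm') hZm'.restrict)
    (bracket _ _ (boundary_ge hZi') hZi'.restrict)⟩

/-- On a locally finite rooted weighted tree with all vertex weights `≥ m`, let `Z_m^H` and
`Z_∞^H` be the `H`-message families with constant boundary values `m` and `+∞` respectively,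
and let `I_H` be the closed interval with endpoints `Z_m^H(o,v)` and `Z_∞^H(o,v)` for a fixed
neighbour `v` of the root. Then (a) every `H`-message family whose boundary values lie in
`[m,+∞]` has `Z(o,v) ∈ I_H`, and (b) the intervals are nested: `I_{H+1} ⊆ I_H`. -/
theorem stmt8 {V : Type*} (G : SimpleGraph V) (hT : G.IsTree) (hlf : G.LocallyFinite)
    (w : Sym2 V → ℝ) (x : V → ℝ) (o : V) (m : ℝ) (hx : ∀ v, m ≤ x v)
    (Zm Zi : ℕ → V → V → EReal)
    (hZm : ∀ H, 1 ≤ H → IsMsgFamily G w x o H (fun _ _ => ((m : ℝ) : EReal)) (Zm H))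
    (hZi : ∀ H, 1 ≤ H → IsMsgFamily G w x o H (fun _ _ => (⊤ : EReal)) (Zi H)) :
    ∀ v, G.Adj o v → ∀ H, 1 ≤ H →
      ((∀ b Z : V → V → EReal,
          (∀ u u', G.Adj u u' → G.dist o u ≤ H → G.dist o u' = H →
            ((m : ℝ) : EReal) ≤ b u u') →
          IsMsgFamily G w x o H b Z →
          Z o v ∈ Set.Icc (min (Zm H o v) (Zi H o v)) (max (Zm H o v) (Zi H o v))) ∧
        Set.Icc (min (Zm (H+1) o v) (Zi (H+1) o v)) (max (Zm (H+1) o v) (Zi (H+1) o v)) ⊆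
          Set.Icc (min (Zm H o v) (Zi H o v)) (max (Zm H o v) (Zi H o v))) :=
  stmt8_general G hT w x o m hx Zm Zi hZm hZi
end
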